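/- arXiv:2603.28564 — 6 statements merged into one kernel-verified Lean document; each statement's English description precedes it below -/
import Mathlib

section
/- For all real numbers v and v′, one has ∫_ℝ |q(z, v) − q(z, v′)| dz ≤ (|v| + |v′|)·|v − v′|. -/
open MeasureTheory intervalIntegral

/-- The function `q(x,v)` from the paper:
`q(x,v) = (2v-2x)·1_{x ∈ [0,v)}` for `v ≥ 0`, and `q(x,v) = (2x-2v)·1_{x ∈ (v,0]}` for `v < 0`. -/
noncomputable def q (x v : ℝ) : ℝ :=
  if 0 ≤ v then Set.indicator (Set.Ico 0 v) (fun y => 2 * v - 2 * y) x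
  else Set.indicator (Set.Ioc v 0) (fun y => 2 * y - 2 * v) x

lemma q_nonneg (x v : ℝ) : 0 ≤ q x v := by
  unfold q
  split
  · exact Set.indicator_nonneg (fun y hy => by rcases hy with ⟨_, h2⟩; linarith) x
  · exact Set.indicator_nonneg (fun y hy => by rcases hy with ⟨h1, _⟩; linarith) x

lemma q_integrable (v : ℝ) : Integrable (fun z => q z v) := by
  unfold q
  split
  · exact ((Continuous.integrableOn_Icc (by continuity)).mono_set
      Set.Ico_subset_Icc_self).integrable_indicator measurableSet_Ico
  · exact ((Continuous.integrableOn_Icc (by continuity)).mono_set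
      Set.Ioc_subset_Icc_self).integrable_indicator measurableSet_Ioc

lemma integral_q (v : ℝ) : ∫ z, q z v = v * v := by
  unfold q
  split
  · rename_i hv
    rw [MeasureTheory.integral_indicator measurableSet_Ico,
      MeasureTheory.setIntegral_congr_set MeasureTheory.Ico_ae_eq_Ioc,
      ← intervalIntegral.integral_of_le hv]
    rw [integral_sub intervalIntegrable_const (intervalIntegrable_id.const_mul 2)]
    simp [intervalIntegral.integral_const_mul 2 (fun x : ℝ => x), integral_id]
    ring
  · rename_i hv
    push_neg at hv
    rw [MeasureTheory.integral_indicator measurableSet_Ioc,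
      ← intervalIntegral.integral_of_le hv.le,
      integral_sub (intervalIntegrable_id.const_mul 2) intervalIntegrable_const]
    simp [intervalIntegral.integral_const_mul 2 (fun x : ℝ => x), integral_id]
    ring

lemma q_mono (z : ℝ) {v v' : ℝ} (h0 : 0 ≤ v') (h : v' ≤ v) : q z v' ≤ q z v := by
  have hv : 0 ≤ v := le_trans h0 h
  unfold q
  rw [if_pos h0, if_pos hv]
  by_cases hz : z ∈ Set.Ico 0 v'
  · rw [Set.indicator_of_mem hz, Set.indicator_of_mem (Set.Ico_subset_Ico_right h hz)]
    linarith
  · rw [Set.indicator_of_notMem hz]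
    exact Set.indicator_nonneg (fun y hy => by rcases hy with ⟨_, h2⟩; linarith) z

lemma caseA {v v' : ℝ} (h0 : 0 ≤ v') (h : v' ≤ v) :
    (∫ z : ℝ, |q z v - q z v'|) ≤ (|v| + |v'|) * |v - v'| := by
  have hv : 0 ≤ v := le_trans h0 h
  have heq : ∀ z : ℝ, |q z v - q z v'| = q z v - q z v' := fun z =>
    abs_of_nonneg (sub_nonneg.mpr (q_mono z h0 h))
  calc (∫ z : ℝ, |q z v - q z v'|) = ∫ z : ℝ, (q z v - q z v') := by simp_rw [heq]
    _ = v * v - v' * v' := by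
        rw [integral_sub (q_integrable v) (q_integrable v'), integral_q, integral_q]
    _ ≤ (|v| + |v'|) * |v - v'| := by
        rw [abs_of_nonneg hv, abs_of_nonneg h0, abs_of_nonneg (sub_nonneg.mpr h)]
        nlinarith

lemma caseB {v v' : ℝ} (h' : v' < 0) (h : 0 ≤ v) :
    (∫ z : ℝ, |q z v - q z v'|) ≤ (|v| + |v'|) * |v - v'| := by
  have hle : ∀ z : ℝ, |q z v - q z v'| ≤ q z v + q z v' := fun z => by
    have := abs_sub (q z v) (q z v')
    calc |q z v - q z v'| ≤ |q z v| + |q z v'| := abs_sub _ _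
      _ = q z v + q z v' := by rw [abs_of_nonneg (q_nonneg z v), abs_of_nonneg (q_nonneg z v')]
  calc (∫ z : ℝ, |q z v - q z v'|) ≤ ∫ z : ℝ, (q z v + q z v') := by
        refine integral_mono_of_nonneg (Filter.Eventually.of_forall fun z => abs_nonneg _)
          ((q_integrable v).add (q_integrable v')) (Filter.Eventually.of_forall hle)
    _ = v * v + v' * v' := by
        rw [integral_add (q_integrable v) (q_integrable v'), integral_q, integral_q]
    _ ≤ (|v| + |v'|) * |v - v'| := by
        rw [abs_of_nonneg h, abs_of_neg h', abs_of_nonneg (by linarith : (0:ℝ) ≤ v - v')]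
        nlinarith

lemma q_neg (x v : ℝ) : q (-x) (-v) = q x v := by
  unfold q
  rcases lt_trichotomy v 0 with hv | hv | hv
  · rw [if_pos (by linarith), if_neg (by linarith)]
    by_cases hx : x ∈ Set.Ioc v 0
    · rw [Set.indicator_of_mem hx, Set.indicator_of_mem (by constructor <;> [linarith [hx.2]; linarith [hx.1]] : -x ∈ Set.Ico 0 (-v))]
      ring
    · rw [Set.indicator_of_notMem hx, Set.indicator_of_notMem]
      intro hmem
      exact hx ⟨by linarith [hmem.2], by linarith [hmem.1]⟩
  · subst hv; simp
  · rw [if_neg (by linarith), if_pos (by linarith)]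
    by_cases hx : x ∈ Set.Ico 0 v
    · rw [Set.indicator_of_mem hx, Set.indicator_of_mem (by constructor <;> [linarith [hx.2]; linarith [hx.1]] : -x ∈ Set.Ioc (-v) 0)]
      ring
    · rw [Set.indicator_of_notMem hx, Set.indicator_of_notMem]
      intro hmem
      exact hx ⟨by linarith [hmem.2], by linarith [hmem.1]⟩

lemma key {v v' : ℝ} (h : v' ≤ v) :
    (∫ z : ℝ, |q z v - q z v'|) ≤ (|v| + |v'|) * |v - v'| := by
  rcases le_or_gt 0 v' with h0 | h0
  · exact caseA h0 h
  rcases le_or_gt 0 v with hv | hv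
  · exact caseB h0 hv
  · have : (∫ z : ℝ, |q z v - q z v'|) = ∫ z : ℝ, |q z (-v') - q z (-v)| := by
      rw [← integral_neg_eq_self (fun z => |q z v - q z v'|)]
      have h1 : ∀ (a b : ℝ), q (-a) b = q a (-b) := fun a b => by
        nth_rewrite 1 [← neg_neg b]; exact q_neg a (-b)
      congr 1
      funext z
      rw [h1, h1, abs_sub_comm]
    rw [this]
    have := caseA (v := -v') (v' := -v) (by linarith) (by linarith)
    calc (∫ z : ℝ, |q z (-v') - q z (-v)|) ≤ (|-v'| + |-v|) * |(-v') - (-v)| := this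
      _ = (|v| + |v'|) * |v - v'| := by rw [abs_neg, abs_neg, neg_sub_neg]; ring

/-- `∫_ℝ |q(z,v) - q(z,v')| dz ≤ (|v| + |v'|)·|v - v'|`. -/
theorem integral_abs_q_sub_q_le (v v' : ℝ) :
    (∫ z : ℝ, |q z v - q z v'|) ≤ (|v| + |v'|) * |v - v'| := by
  rcases le_total v' v with h | h
  · exact key h
  · have := key h
    calc (∫ z : ℝ, |q z v - q z v'|) = ∫ z : ℝ, |q z v' - q z v| := by
          simp_rw [abs_sub_comm]
      _ ≤ (|v'| + |v|) * |v' - v| := this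
      _ = (|v| + |v'|) * |v - v'| := by rw [abs_sub_comm]; ring
end

section
/- Let η ∈ (0, 1], K, L > 0, and let a : ℝ → ℝ satisfy |a(x)| ≤ K(1 + |x|) for all x and |a(x) − a(y)| ≤ L(|x − y|^η + |x − y|) for all x, y ∈ ℝ. Then there exists a constant C > 0, depending only on K, L, η, such that: for every x ∈ ℝ and every continuous f : [0, 1] → ℝ with f(t) = x + ∫₀ᵗ a(f(s)) ds for all t ∈ [0, 1], one has both |f(t) − x| ≤ C t (1 + |x|) and |f(t) − x − t a(x)| ≤ C t^{1+η} (1 + |x|) for all t ∈ [0, 1]. -/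
open MeasureTheory

set_option maxHeartbeats 1000000 in
/-- Euler-scheme error estimate: for a drift `a` of linear growth satisfying a two-scale
`η`-Hölder condition, any solution of `df_t = a(f_t) dt`, `f_0 = x`, satisfies
`|f(t) - x| ≤ C t (1+|x|)` and `|f(t) - x - t a(x)| ≤ C t^{1+η} (1+|x|)` on `[0,1]`,
with `C` depending only on `K`, `L`, `η`. -/
theorem euler_scheme_error (η K L : ℝ) (hη : η ∈ Set.Ioc (0 : ℝ) 1)
    (hK : 0 < K) (hL : 0 < L) :
    ∃ C > 0, ∀ a : ℝ → ℝ,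
      (∀ x : ℝ, |a x| ≤ K * (1 + |x|)) →
      (∀ x y : ℝ, |a x - a y| ≤ L * (|x - y| ^ η + |x - y|)) →
      ∀ (x : ℝ) (f : ℝ → ℝ),
        ContinuousOn f (Set.Icc 0 1) →
        (∀ t ∈ Set.Icc (0 : ℝ) 1, f t = x + ∫ s in (0 : ℝ)..t, a (f s)) →
        ∀ t ∈ Set.Icc (0 : ℝ) 1,
          |f t - x| ≤ C * t * (1 + |x|) ∧
          |f t - x - t * a x| ≤ C * t ^ (1 + η) * (1 + |x|) := by
  obtain ⟨hη0, hη1⟩ := hη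
  set C₁ : ℝ := K * Real.exp K with hC₁def
  have hC₁ : 0 < C₁ := mul_pos hK (Real.exp_pos K)
  refine ⟨(1 + L) * (1 + 2 * C₁), by positivity, ?_⟩
  intro a hgrowth hHolder x f hfc hfint
  have hx : (0:ℝ) ≤ 1 + |x| := by positivity
  -- continuity of `a`
  have ha_cont : Continuous a := by
    rw [continuous_iff_continuousAt]
    intro z
    rw [ContinuousAt, tendsto_iff_dist_tendsto_zero]
    have h1 : Filter.Tendsto (fun y : ℝ => |y - z|) (nhds z) (nhds 0) := by
      have := ((continuous_id.sub (continuous_const (y := z))).abs).tendsto z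
      simpa using this
    have h2 : Filter.Tendsto (fun y : ℝ => |y - z| ^ η) (nhds z) (nhds 0) := by
      have h3 : Filter.Tendsto (fun u : ℝ => u ^ η) (nhds 0) (nhds 0) := by
        have := (Real.continuousAt_rpow_const 0 η (Or.inr hη0.le)).tendsto
        simpa [Real.zero_rpow hη0.ne'] using this
      exact h3.comp h1
    have h0 : Filter.Tendsto (fun y : ℝ => L * (|y - z| ^ η + |y - z|)) (nhds z) (nhds 0) := by
      have := (h2.add h1).const_mul L
      simpa using this
    refine squeeze_zero (fun y => dist_nonneg) (fun y => ?_) h0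
    rw [Real.dist_eq]
    exact hHolder y z
  -- the integrand is continuous on `[0,1]`
  have hg : ContinuousOn (fun s => a (f s)) (Set.Icc (0:ℝ) 1) :=
    ha_cont.comp_continuousOn hfc
  have hInt : ∀ t ∈ Set.Icc (0:ℝ) 1,
      IntervalIntegrable (fun s => a (f s)) volume 0 t := fun t ht =>
    (hg.mono (Set.Icc_subset_Icc le_rfl ht.2)).intervalIntegrable_of_Icc ht.1
  set F : ℝ → ℝ := fun u => ∫ s in (0:ℝ)..u, a (f s) with hFdef
  have hFeq : ∀ u ∈ Set.Icc (0:ℝ) 1, F u = f u - x := by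
    intro u hu
    have := hfint u hu
    simp [hFdef]
    linarith
  have hFc : ContinuousOn F (Set.Icc (0:ℝ) 1) :=
    (hfc.sub continuousOn_const).congr hFeq
  -- right derivative of `F`
  have hF' : ∀ t ∈ Set.Ico (0:ℝ) 1,
      HasDerivWithinAt F (a (f t)) (Set.Ici t) t := by
    intro t ht
    have hcw : ContinuousWithinAt (fun s => a (f s)) (Set.Ioi t) t := by
      have h1 : ContinuousWithinAt (fun s => a (f s)) (Set.Icc t 1) t :=
        (hg.mono (Set.Icc_subset_Icc ht.1 le_rfl)) t ⟨le_rfl, ht.2.le⟩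
      rw [ContinuousWithinAt, nhdsWithin_Icc_eq_nhdsGE ht.2] at h1
      exact h1.mono_left (nhdsWithin_mono t Set.Ioi_subset_Ici_self)
    have hmeas : StronglyMeasurableAtFilter (fun s => a (f s)) (nhdsWithin t (Set.Ioi t)) :=
      ⟨Set.Icc t 1, Icc_mem_nhdsGT_of_mem ⟨le_rfl, ht.2⟩,
        ((hg.mono (Set.Icc_subset_Icc ht.1 le_rfl)).aestronglyMeasurable measurableSet_Icc)⟩
    exact intervalIntegral.integral_hasDerivWithinAt_right (hInt t ⟨ht.1, ht.2.le⟩) hmeas hcw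
  -- Grönwall
  have hGron : ∀ t ∈ Set.Icc (0:ℝ) 1,
      ‖F t‖ ≤ gronwallBound 0 K (K * (1 + |x|)) (t - 0) := by
    refine norm_le_gronwallBound_of_norm_deriv_right_le hFc hF' ?_ ?_
    · simp [hFdef]
    · intro t ht
      have h1 : |a (f t)| ≤ K * (1 + |f t|) := hgrowth (f t)
      have h2 : |f t| ≤ |x| + |f t - x| := by
        have := abs_add_le x (f t - x); simpa using this
      have h3 : f t - x = F t := (hFeq t ⟨ht.1, ht.2.le⟩).symm
      rw [Real.norm_eq_abs, Real.norm_eq_abs, ← h3]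
      nlinarith [abs_nonneg (f t - x)]

  -- linear growth bound
  have h1 : ∀ t ∈ Set.Icc (0:ℝ) 1, |f t - x| ≤ C₁ * t * (1 + |x|) := by
    intro t ht
    have hb := hGron t ht
    rw [gronwallBound_of_K_ne_0 hK.ne'] at hb
    simp only [Real.norm_eq_abs, sub_zero] at hb
    rw [← hFeq t ht]
    have hprod : Real.exp (-(K * t)) * Real.exp (K * t) = 1 := by
      rw [← Real.exp_add]; simp
    have hexp1 : Real.exp (K * t) - 1 ≤ K * t * Real.exp (K * t) := by
      nlinarith [Real.add_one_le_exp (-(K * t)), Real.exp_pos (K * t), hprod]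
    have hexp2 : Real.exp (K * t) ≤ Real.exp K := by
      apply Real.exp_le_exp.2; nlinarith [ht.1, ht.2]
    have hE : Real.exp (K * t) - 1 ≤ C₁ * t := by
      rw [hC₁def]
      nlinarith [mul_nonneg hK.le ht.1, Real.exp_pos (K * t)]
    have hsimp : K * (1 + |x|) / K = 1 + |x| := by field_simp
    rw [hsimp] at hb
    nlinarith [mul_le_mul_of_nonneg_left hE hx]
  intro t ht
  refine ⟨?_, ?_⟩
  · have := h1 t ht
    nlinarith [mul_nonneg (mul_nonneg ht.1 hx) hC₁.le,
      mul_nonneg (mul_nonneg ht.1 hx) hL.le,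
      mul_nonneg (mul_nonneg (mul_nonneg ht.1 hx) hL.le) hC₁.le,
      mul_nonneg ht.1 hx]
  -- second estimate
  · set D : ℝ := C₁ * (1 + |x|) with hDdef
    have hD : 0 ≤ D := by positivity
    have hrpow_cont : Continuous (fun s : ℝ => s ^ η) :=
      Real.continuous_rpow_const hη0.le
    have hφc : Continuous (fun s : ℝ => L * (D ^ η * s ^ η + D * s)) :=
      continuous_const.mul ((continuous_const.mul hrpow_cont).add
        (continuous_const.mul continuous_id))
    -- rewrite the error as an integral
    have hkey : f t - x - t * a x = ∫ s in (0:ℝ)..t, (a (f s) - a x) := by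
      rw [intervalIntegral.integral_sub (hInt t ht) intervalIntegrable_const,
        intervalIntegral.integral_const]
      have := hfint t ht
      simp only [smul_eq_mul, sub_zero]
      linarith
    have hbound : |f t - x - t * a x| ≤
        |∫ s in (0:ℝ)..t, L * (D ^ η * s ^ η + D * s)| := by
      rw [hkey, ← Real.norm_eq_abs]
      apply intervalIntegral.norm_integral_le_abs_of_norm_le
      · filter_upwards [MeasureTheory.ae_restrict_mem measurableSet_uIoc] with s hs
        rw [Set.uIoc_of_le ht.1] at hs
        have hs01 : s ∈ Set.Icc (0:ℝ) 1 := ⟨hs.1.le, hs.2.trans ht.2⟩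
        have hfs : |f s - x| ≤ D * s := by
          have := h1 s hs01
          rw [hDdef]; nlinarith
        have hfsη : |f s - x| ^ η ≤ D ^ η * s ^ η := by
          rw [← Real.mul_rpow hD hs.1.le]
          exact Real.rpow_le_rpow (abs_nonneg _) hfs hη0.le
        have := hHolder (f s) x
        rw [Real.norm_eq_abs]
        calc |a (f s) - a x| ≤ L * (|f s - x| ^ η + |f s - x|) := this
          _ ≤ L * (D ^ η * s ^ η + D * s) := by nlinarith
      · exact hφc.intervalIntegrable 0 t
    -- compute the integral
    have hint1 : IntervalIntegrable (fun s : ℝ => D ^ η * s ^ η) volume 0 t :=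
      (continuous_const.mul hrpow_cont).intervalIntegrable 0 t
    have hint2 : IntervalIntegrable (fun s : ℝ => D * s) volume 0 t :=
      (continuous_const.mul continuous_id).intervalIntegrable 0 t
    have hval : (∫ s in (0:ℝ)..t, L * (D ^ η * s ^ η + D * s)) =
        L * (D ^ η * (t ^ (η + 1) / (η + 1)) + D * (t ^ 2 / 2)) := by
      rw [intervalIntegral.integral_const_mul,
        intervalIntegral.integral_add hint1 hint2,
        intervalIntegral.integral_const_mul, intervalIntegral.integral_const_mul,
        integral_rpow (Or.inl (by linarith)), integral_id]
      rw [Real.zero_rpow (by positivity)]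
      ring
    -- final bounds
    have htpow : (0:ℝ) ≤ t ^ (1 + η) := Real.rpow_nonneg ht.1 _
    have ht2 : t ^ 2 ≤ t ^ (1 + η) := by
      rcases eq_or_lt_of_le ht.1 with h | h
      · rw [← h, Real.zero_rpow (by positivity)]; norm_num
      · calc t ^ 2 = t ^ ((2:ℕ):ℝ) := by rw [Real.rpow_natCast]
          _ ≤ t ^ (1 + η) := by
              apply Real.rpow_le_rpow_of_exponent_ge h ht.2
              push_cast; linarith
    have htη : t ^ (η + 1) ≤ t ^ (1 + η) := by rw [add_comm]
    have hC1η : C₁ ^ η ≤ 1 + C₁ := by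
      rcases le_total C₁ 1 with h | h
      · have := Real.rpow_le_one hC₁.le h hη0.le
        linarith
      · have : C₁ ^ η ≤ C₁ ^ (1:ℝ) := Real.rpow_le_rpow_of_exponent_le h hη1
        rw [Real.rpow_one] at this
        linarith
    have hxη : (1 + |x|) ^ η ≤ 1 + |x| := by
      have : (1 + |x|) ^ η ≤ (1 + |x|) ^ (1:ℝ) :=
        Real.rpow_le_rpow_of_exponent_le (by nlinarith [abs_nonneg x]) hη1
      rwa [Real.rpow_one] at this
    have hDη : D ^ η = C₁ ^ η * (1 + |x|) ^ η := Real.mul_rpow hC₁.le hx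
    have hDηle : D ^ η ≤ (1 + C₁) * (1 + |x|) := by
      rw [hDη]
      have h1' : (0:ℝ) ≤ (1 + |x|) ^ η := Real.rpow_nonneg hx _
      have h2' : (0:ℝ) ≤ C₁ ^ η := Real.rpow_nonneg hC₁.le _
      nlinarith
    rw [hval] at hbound
    have hη1' : (1:ℝ) ≤ η + 1 := by linarith
    have habs : L * (D ^ η * (t ^ (η + 1) / (η + 1)) + D * (t ^ 2 / 2)) ≤
        (1 + L) * (1 + 2 * C₁) * t ^ (1 + η) * (1 + |x|) := by
      have htη1 : (0:ℝ) ≤ t ^ (η + 1) := Real.rpow_nonneg ht.1 _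
      have e1 : D ^ η * (t ^ (η + 1) / (η + 1)) ≤ (1 + C₁) * (1 + |x|) * t ^ (1 + η) := by
        have : t ^ (η + 1) / (η + 1) ≤ t ^ (1 + η) := by
          rw [div_le_iff₀ (by linarith)]
          nlinarith
        have hDη0 : (0:ℝ) ≤ D ^ η := Real.rpow_nonneg hD _
        have hdivnn : (0:ℝ) ≤ t ^ (η + 1) / (η + 1) := by positivity
        nlinarith
      have e2 : D * (t ^ 2 / 2) ≤ C₁ * (1 + |x|) * t ^ (1 + η) := by
        rw [hDdef]
        nlinarith [sq_nonneg t]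
      nlinarith
    have hnn : (0:ℝ) ≤ L * (D ^ η * (t ^ (η + 1) / (η + 1)) + D * (t ^ 2 / 2)) := by
      have htη1 : (0:ℝ) ≤ t ^ (η + 1) := Real.rpow_nonneg ht.1 _
      have hDη0 : (0:ℝ) ≤ D ^ η := Real.rpow_nonneg hD _
      have : (0:ℝ) ≤ t ^ 2 := sq_nonneg t
      positivity
    rw [abs_of_nonneg hnn] at hbound
    linarith
end

section
/- Let η ∈ (0, 1], K, K′, L, L′ > 0, and let a : ℝ → ℝ be differentiable with |a(x)| ≤ K(1 + |x|), |a′(x)| ≤ K′, and |a′(x) − a′(y)| ≤ L′(|x − y|^η + |x − y|) for all x, y ∈ ℝ. Then there exists a constant C > 0, depending only on K, K′, L′, η, such that: for every x ∈ ℝ and every continuous f : [0, 1] → ℝ with f(t) = x + ∫₀ᵗ a(f(s)) ds for all t ∈ [0, 1], one has |f(t) − x − t a(x) − (t²/2) a(x) a′(x)| ≤ C (1 + |x|^{1+η}) t^{2+η} for all t ∈ [0, 1]. -/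
open MeasureTheory

section Aux

lemma holder_aux {η K' L' : ℝ} (hη0 : 0 < η) (hη1 : η ≤ 1) {a' : ℝ → ℝ}
    (hL0 : 0 ≤ L') (hb : ∀ x, |a' x| ≤ K')
    (hH : ∀ x y : ℝ, |a' x - a' y| ≤ L' * (|x - y| ^ η + |x - y|)) :
    ∀ z y : ℝ, |a' z - a' y| ≤ 2 * max K' L' * |z - y| ^ η := by
  intro z y
  set r := |z - y| with hr
  have hr0 : 0 ≤ r := abs_nonneg _
  have hrη : 0 ≤ r ^ η := Real.rpow_nonneg hr0 _
  rcases le_or_gt r 1 with h | h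
  · have h1 : r ≤ r ^ η := by
      rcases eq_or_lt_of_le hr0 with h0 | h0
      · rw [← h0]; exact Real.rpow_nonneg le_rfl _
      · calc r = r ^ (1 : ℝ) := (Real.rpow_one r).symm
          _ ≤ r ^ η := Real.rpow_le_rpow_of_exponent_ge h0 h hη1
    have := hH z y
    have hL : L' * (r ^ η + r) ≤ 2 * L' * r ^ η := by
      nlinarith [mul_le_mul_of_nonneg_left h1 hL0]
    have h2 : (2 : ℝ) * L' * r ^ η ≤ 2 * max K' L' * r ^ η := by
      have : L' ≤ max K' L' := le_max_right _ _
      nlinarith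
    linarith
  · have h1 : (1 : ℝ) ≤ r ^ η := by
      calc (1 : ℝ) = 1 ^ η := (Real.one_rpow η).symm
        _ ≤ r ^ η := Real.rpow_le_rpow zero_le_one h.le hη0.le
    have h2 : |a' z - a' y| ≤ 2 * K' := by
      calc |a' z - a' y| ≤ |a' z| + |a' y| := abs_sub _ _
        _ ≤ K' + K' := add_le_add (hb z) (hb y)
        _ = 2 * K' := by ring
    have hK0 : 0 ≤ K' := le_trans (abs_nonneg _) (hb z)
    have : (2 : ℝ) * K' ≤ 2 * max K' L' * r ^ η := by
      have hm : K' ≤ max K' L' := le_max_left _ _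
      nlinarith
    linarith

lemma taylor_aux {η C₃ : ℝ} (hC₃ : 0 ≤ C₃) {a a' : ℝ → ℝ}
    (hd : ∀ x : ℝ, HasDerivAt a (a' x) x)
    (hH : ∀ z y : ℝ, |a' z - a' y| ≤ C₃ * |z - y| ^ η) (hη : 0 < η) (x y : ℝ) :
    |a y - a x - a' x * (y - x)| ≤ C₃ * |y - x| ^ (1 + η) := by
  have hφ : ∀ u ∈ Set.uIcc x y,
      HasDerivWithinAt (fun u => a u - a' x * u) (a' u - a' x) (Set.uIcc x y) u := by
    intro u _
    have h1 : HasDerivAt (fun u : ℝ => a' x * u) (a' x) u := by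
      simpa using (hasDerivAt_id u).const_mul (a' x)
    exact ((hd u).sub h1).hasDerivWithinAt
  have bound : ∀ u ∈ Set.uIcc x y, ‖a' u - a' x‖ ≤ C₃ * |y - x| ^ η := by
    intro u hu
    rw [Real.norm_eq_abs]
    calc |a' u - a' x| ≤ C₃ * |u - x| ^ η := hH u x
      _ ≤ C₃ * |y - x| ^ η := by
          have h1 : |u - x| ≤ |y - x| := Set.abs_sub_left_of_mem_uIcc hu
          exact mul_le_mul_of_nonneg_left
            (Real.rpow_le_rpow (abs_nonneg _) h1 hη.le) hC₃
  have := Convex.norm_image_sub_le_of_norm_hasDerivWithin_le hφ bound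
    (convex_uIcc x y) (Set.left_mem_uIcc) (Set.right_mem_uIcc)
  rw [Real.norm_eq_abs, Real.norm_eq_abs] at this
  have heq : (a y - a' x * y) - (a x - a' x * x) = a y - a x - a' x * (y - x) := by ring
  rw [heq] at this
  calc |a y - a x - a' x * (y - x)| ≤ C₃ * |y - x| ^ η * |y - x| := this
    _ = C₃ * |y - x| ^ (1 + η) := by
        rw [Real.rpow_add' (abs_nonneg _) (by linarith)]
        rw [Real.rpow_one]; ring

lemma onexp_aux {η : ℝ} (hη0 : 0 < η) (hη1 : η ≤ 1) (x : ℝ) :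
    (1 + |x|) ^ (1 + η) ≤ 4 * (1 + |x| ^ (1 + η)) := by
  have hp0 : (0 : ℝ) ≤ 1 + η := by linarith
  have h24 : (2 : ℝ) ^ (1 + η) ≤ 4 := by
    calc (2 : ℝ) ^ (1 + η) ≤ (2 : ℝ) ^ (2 : ℝ) :=
          Real.rpow_le_rpow_of_exponent_le one_le_two (by linarith)
      _ = 4 := by
          rw [show (2 : ℝ) = ((2 : ℕ) : ℝ) by norm_num, Real.rpow_natCast]; norm_num
  have hxp : (0 : ℝ) ≤ |x| ^ (1 + η) := Real.rpow_nonneg (abs_nonneg x) _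
  rcases le_or_gt (|x|) 1 with h | h
  · calc (1 + |x|) ^ (1 + η) ≤ (2 : ℝ) ^ (1 + η) :=
        Real.rpow_le_rpow (by positivity) (by linarith) hp0
      _ ≤ 4 := h24
      _ ≤ 4 * (1 + |x| ^ (1 + η)) := by nlinarith
  · calc (1 + |x|) ^ (1 + η) ≤ (2 * |x|) ^ (1 + η) :=
        Real.rpow_le_rpow (by positivity) (by linarith) hp0
      _ = 2 ^ (1 + η) * |x| ^ (1 + η) := Real.mul_rpow zero_le_two (abs_nonneg x)
      _ ≤ 4 * |x| ^ (1 + η) := mul_le_mul_of_nonneg_right h24 hxp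
      _ ≤ 4 * (1 + |x| ^ (1 + η)) := by nlinarith

lemma onelin_aux {η : ℝ} (hη0 : 0 < η) (x : ℝ) :
    1 + |x| ≤ 2 * (1 + |x| ^ (1 + η)) := by
  have hxp : (0 : ℝ) ≤ |x| ^ (1 + η) := Real.rpow_nonneg (abs_nonneg x) _
  rcases le_or_gt (|x|) 1 with h | h
  · nlinarith
  · have : |x| ≤ |x| ^ (1 + η) := by
      calc |x| = |x| ^ (1 : ℝ) := (Real.rpow_one _).symm
        _ ≤ |x| ^ (1 + η) := Real.rpow_le_rpow_of_exponent_le h.le (by linarith)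
    nlinarith

lemma exp_aux {K r : ℝ} (hr0 : 0 ≤ r) (hrK : r ≤ K) :
    Real.exp r - 1 ≤ r * Real.exp K := by
  have h1 : 1 - r ≤ Real.exp (-r) := by linarith [Real.add_one_le_exp (-r)]
  have h2 : Real.exp (-r) * Real.exp r = 1 := by
    rw [← Real.exp_add]; simp
  have h3 : Real.exp r ≤ Real.exp K := Real.exp_le_exp.mpr hrK
  nlinarith [Real.exp_pos r]

end Aux

/-- Improved Euler-scheme error estimate: with a differentiable drift `a` of linear growth,
bounded derivative `a'` and `η`-Hölder `a'`, any solution of `df_t = a(f_t) dt`, `f_0 = x`,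
satisfies `|f(t) - x - t a(x) - (t²/2) a(x) a'(x)| ≤ C (1+|x|^{1+η}) t^{2+η}` on `[0,1]`,
with `C` depending only on `K`, `K'`, `L'`, `η`. -/
theorem improved_euler_scheme_error (η K K' L' : ℝ) (hη : η ∈ Set.Ioc (0 : ℝ) 1)
    (hK : 0 < K) (hK' : 0 < K') (hL' : 0 < L') :
    ∃ C > 0, ∀ a a' : ℝ → ℝ,
      (∀ x : ℝ, HasDerivAt a (a' x) x) →
      (∀ x : ℝ, |a x| ≤ K * (1 + |x|)) →
      (∀ x : ℝ, |a' x| ≤ K') →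
      (∀ x y : ℝ, |a' x - a' y| ≤ L' * (|x - y| ^ η + |x - y|)) →
      ∀ (x : ℝ) (f : ℝ → ℝ),
        ContinuousOn f (Set.Icc 0 1) →
        (∀ t ∈ Set.Icc (0 : ℝ) 1, f t = x + ∫ s in (0 : ℝ)..t, a (f s)) →
        ∀ t ∈ Set.Icc (0 : ℝ) 1,
          |f t - x - t * a x - t ^ 2 / 2 * a x * a' x| ≤
            C * (1 + |x| ^ (1 + η)) * t ^ (2 + η) := by
  obtain ⟨hη0, hη1⟩ := hη
  set C₁ := K * Real.exp K with hC₁def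
  have hC₁ : 0 < C₁ := by positivity
  set C₂ := K' * C₁ with hC₂def
  have hC₂ : 0 < C₂ := by positivity
  set C₃ := 2 * max K' L' with hC₃def
  have hmax : 0 < max K' L' := lt_max_of_lt_left hK'
  have hC₃ : 0 < C₃ := by rw [hC₃def]; linarith
  refine ⟨4 * C₃ * (1 + C₁ ^ 2) + 2 * K' * C₂, by positivity, ?_⟩
  intro a a' hd hgrow hb hH x f hfc hfeq t ht
  have hcont_a : Continuous a := continuous_iff_continuousAt.mpr fun u => (hd u).continuousAt
  have haf : ContinuousOn (fun s => a (f s)) (Set.Icc 0 1) := hcont_a.comp_continuousOn hfc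
  have h01 : (0 : ℝ) ∈ Set.Icc (0 : ℝ) 1 := Set.left_mem_Icc.mpr zero_le_one
  have hint : ∀ v ∈ Set.Icc (0 : ℝ) 1,
      IntervalIntegrable (fun s => a (f s)) volume 0 v := fun v hv =>
    (haf.mono (Set.uIcc_subset_Icc h01 hv)).intervalIntegrable
  -- global Lipschitz bound for `a`
  have hLip : ∀ y z : ℝ, |a y - a z| ≤ K' * |y - z| := by
    intro y z
    have := Convex.norm_image_sub_le_of_norm_hasDerivWithin_le (f' := a')
      (fun u _ => (hd u).hasDerivWithinAt)
      (fun u _ => by rw [Real.norm_eq_abs]; exact hb u)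
      convex_univ (Set.mem_univ z) (Set.mem_univ y)
    simpa [Real.norm_eq_abs] using this
  -- right derivative of f
  have hderiv : ∀ b ∈ Set.Ico (0 : ℝ) 1, HasDerivWithinAt f (a (f b)) (Set.Ici b) b := by
    intro b hb'
    have hbIcc : b ∈ Set.Icc (0 : ℝ) 1 := ⟨hb'.1, hb'.2.le⟩
    have hmem : Set.Icc (0 : ℝ) 1 ∈ nhdsWithin b (Set.Ici b) := by
      refine Filter.mem_of_superset (Icc_mem_nhdsGE_of_mem ⟨le_refl b, hb'.2⟩) ?_
      exact Set.Icc_subset_Icc hb'.1 le_rfl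
    have hle : nhdsWithin b (Set.Ioi b) ≤ nhdsWithin b (Set.Ici b) :=
      nhdsWithin_mono b Set.Ioi_subset_Ici_self
    have hmem2 : Set.Icc (0 : ℝ) 1 ∈ nhdsWithin b (Set.Ioi b) := hle hmem
    have hmeas : StronglyMeasurableAtFilter (fun s => a (f s)) (nhdsWithin b (Set.Ioi b)) volume :=
      ⟨Set.Icc 0 1, hmem2, haf.aestronglyMeasurable measurableSet_Icc⟩
    have hcw : ContinuousWithinAt (fun s => a (f s)) (Set.Ioi b) b :=
      (haf b hbIcc).mono_of_mem_nhdsWithin hmem2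
    have hF : HasDerivWithinAt (fun u => x + ∫ s in (0 : ℝ)..u, a (f s)) (a (f b))
        (Set.Ici b) b :=
      (intervalIntegral.integral_hasDerivWithinAt_right (hint b hbIcc) hmeas hcw).const_add x
    refine hF.congr_of_eventuallyEq ?_ (hfeq b hbIcc)
    exact Filter.eventuallyEq_of_mem hmem fun s hs => hfeq s hs
  have hf0 : f 0 = x := by simpa using hfeq 0 h01
  -- Gronwall bound
  have hgron : ∀ u ∈ Set.Icc (0 : ℝ) 1,
      |f u - x| ≤ (1 + |x|) * (Real.exp (K * u) - 1) := by
    intro u hu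
    have bound : ∀ s ∈ Set.Ico (0 : ℝ) 1,
        ‖a (f s)‖ ≤ K * ‖f s - x‖ + K * (1 + |x|) := by
      intro s _
      rw [Real.norm_eq_abs, Real.norm_eq_abs]
      have h1 : |a (f s)| ≤ K * (1 + |f s|) := hgrow (f s)
      have h2 : |f s| ≤ |x| + |f s - x| := by
        calc |f s| = |x + (f s - x)| := by ring_nf
          _ ≤ |x| + |f s - x| := abs_add_le _ _
      nlinarith [abs_nonneg (f s - x)]
    have h := norm_le_gronwallBound_of_norm_deriv_right_le (δ := 0)
      (hfc.sub continuousOn_const) (fun s hs => (hderiv s hs).sub_const x)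
      (by rw [Real.norm_eq_abs]; simp [hf0]) bound u hu
    rw [Real.norm_eq_abs, gronwallBound_of_K_ne_0 hK.ne'] at h
    simp only [sub_zero] at h
    refine h.trans (le_of_eq ?_)
    field_simp
    ring
  have hbd1 : ∀ u ∈ Set.Icc (0 : ℝ) 1, |f u - x| ≤ C₁ * (1 + |x|) * u := by
    intro u hu
    have he : Real.exp (K * u) - 1 ≤ (K * u) * Real.exp K :=
      exp_aux (mul_nonneg hK.le hu.1) (by nlinarith [hu.2])
    calc |f u - x| ≤ (1 + |x|) * (Real.exp (K * u) - 1) := hgron u hu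
      _ ≤ (1 + |x|) * ((K * u) * Real.exp K) :=
          mul_le_mul_of_nonneg_left he (by positivity)
      _ = C₁ * (1 + |x|) * u := by rw [hC₁def]; ring
  -- second-order bound
  have hbd2 : ∀ u ∈ Set.Icc (0 : ℝ) 1,
      |f u - x - u * a x| ≤ C₂ * (1 + |x|) * u ^ 2 := by
    intro u hu
    have heq : f u - x - u * a x = ∫ s in (0 : ℝ)..u, (a (f s) - a x) := by
      rw [intervalIntegral.integral_sub (hint u hu) intervalIntegrable_const,
        intervalIntegral.integral_const, hfeq u hu]
      simp only [smul_eq_mul, sub_zero]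
      ring
    have hae : ∀ᵐ s ∂(volume.restrict (Set.uIoc (0 : ℝ) u)),
        ‖a (f s) - a x‖ ≤ (K' * C₁ * (1 + |x|)) * s := by
      rw [Set.uIoc_of_le hu.1]
      refine ae_restrict_of_forall_mem measurableSet_Ioc fun s hs => ?_
      have hsIcc : s ∈ Set.Icc (0 : ℝ) 1 := ⟨hs.1.le, hs.2.trans hu.2⟩
      rw [Real.norm_eq_abs]
      calc |a (f s) - a x| ≤ K' * |f s - x| := hLip (f s) x
        _ ≤ K' * (C₁ * (1 + |x|) * s) :=
            mul_le_mul_of_nonneg_left (hbd1 s hsIcc) hK'.le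
        _ = (K' * C₁ * (1 + |x|)) * s := by ring
    have hgint : IntervalIntegrable (fun s => (K' * C₁ * (1 + |x|)) * s) volume 0 u :=
      (continuous_const.mul continuous_id).intervalIntegrable _ _
    have hval : ∫ s in (0 : ℝ)..u, (K' * C₁ * (1 + |x|)) * s
        = (K' * C₁ * (1 + |x|)) * (u ^ 2 / 2) := by
      rw [intervalIntegral.integral_const_mul, integral_id]
      ring
    have := intervalIntegral.norm_integral_le_abs_of_norm_le hae hgint
    rw [Real.norm_eq_abs] at this
    rw [heq]
    refine this.trans ?_
    rw [hval, abs_of_nonneg (by positivity)]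
    rw [hC₂def]
    nlinarith [sq_nonneg u, mul_nonneg (mul_nonneg hK'.le hC₁.le) (abs_nonneg x)]
  -- now the main estimate
  have hHol := holder_aux hη0 hη1 hL'.le hb hH
  have hHol' : ∀ z y : ℝ, |a' z - a' y| ≤ C₃ * |z - y| ^ η := by
    intro z y; rw [hC₃def]; exact hHol z y
  have hB0 : (0 : ℝ) ≤ 1 + |x| ^ (1 + η) := by positivity
  have key : ∀ s ∈ Set.Ioc (0 : ℝ) t,
      |a (f s) - a x - s * (a x * a' x)| ≤
        (4 * C₃ * (1 + C₁ ^ 2) + 2 * K' * C₂) * (1 + |x| ^ (1 + η)) * s ^ (1 + η) := by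
    intro s hs
    have hsIcc : s ∈ Set.Icc (0 : ℝ) 1 := ⟨hs.1.le, hs.2.trans ht.2⟩
    have hsp : (0 : ℝ) ≤ s ^ (1 + η) := Real.rpow_nonneg hs.1.le _
    have split : a (f s) - a x - s * (a x * a' x)
        = (a (f s) - a x - a' x * (f s - x)) + a' x * (f s - x - s * a x) := by ring
    have t1 : |a (f s) - a x - a' x * (f s - x)|
        ≤ 4 * C₃ * (1 + C₁ ^ 2) * (1 + |x| ^ (1 + η)) * s ^ (1 + η) := by
      have h1 := taylor_aux hC₃.le hd hHol' hη0 x (f s)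
      have h2 : |f s - x| ^ (1 + η) ≤ (C₁ * (1 + |x|) * s) ^ (1 + η) :=
        Real.rpow_le_rpow (abs_nonneg _) (hbd1 s hsIcc) (by linarith)
      have h3 : (C₁ * (1 + |x|) * s) ^ (1 + η)
          = C₁ ^ (1 + η) * (1 + |x|) ^ (1 + η) * s ^ (1 + η) := by
        rw [Real.mul_rpow (by positivity) hs.1.le, Real.mul_rpow hC₁.le (by positivity)]
      have hC₁p : C₁ ^ (1 + η) ≤ 1 + C₁ ^ 2 := by
        rcases le_or_gt C₁ 1 with hc | hc
        · have : C₁ ^ (1 + η) ≤ 1 := Real.rpow_le_one hC₁.le hc (by linarith)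
          nlinarith [sq_nonneg C₁]
        · have h5 : C₁ ^ (1 + η) ≤ C₁ ^ (2 : ℝ) :=
            Real.rpow_le_rpow_of_exponent_le hc.le (by linarith)
          have h6 : C₁ ^ (2 : ℝ) = C₁ ^ 2 := by
            rw [show (2 : ℝ) = ((2 : ℕ) : ℝ) by norm_num, Real.rpow_natCast]
          rw [h6] at h5
          linarith
      have h4 := onexp_aux hη0 hη1 x
      calc |a (f s) - a x - a' x * (f s - x)| ≤ C₃ * |f s - x| ^ (1 + η) := h1
        _ ≤ C₃ * (C₁ ^ (1 + η) * (1 + |x|) ^ (1 + η) * s ^ (1 + η)) := by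
            rw [← h3]; exact mul_le_mul_of_nonneg_left h2 hC₃.le
        _ ≤ C₃ * ((1 + C₁ ^ 2) * (4 * (1 + |x| ^ (1 + η))) * s ^ (1 + η)) := by
            refine mul_le_mul_of_nonneg_left ?_ hC₃.le
            refine mul_le_mul_of_nonneg_right ?_ hsp
            exact mul_le_mul hC₁p h4 (Real.rpow_nonneg (by positivity) _) (by nlinarith)
        _ = 4 * C₃ * (1 + C₁ ^ 2) * (1 + |x| ^ (1 + η)) * s ^ (1 + η) := by ring
    have t2 : |a' x| * |f s - x - s * a x|
        ≤ 2 * K' * C₂ * (1 + |x| ^ (1 + η)) * s ^ (1 + η) := by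
      have h1 : |a' x| * |f s - x - s * a x| ≤ K' * (C₂ * (1 + |x|) * s ^ 2) :=
        mul_le_mul (hb x) (hbd2 s hsIcc) (abs_nonneg _) hK'.le
      have hs2 : s ^ 2 ≤ s ^ (1 + η) := by
        have := Real.rpow_le_rpow_of_exponent_ge hs.1 (hs.2.trans ht.2) 
          (show (1 : ℝ) + η ≤ 2 by linarith)
        calc s ^ 2 = s ^ (2 : ℝ) := by
              rw [show (2 : ℝ) = ((2 : ℕ) : ℝ) by norm_num, Real.rpow_natCast]
          _ ≤ s ^ (1 + η) := this
      have hlin := onelin_aux hη0 x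
      calc |a' x| * |f s - x - s * a x| ≤ K' * (C₂ * (1 + |x|) * s ^ 2) := h1
        _ ≤ K' * (C₂ * (2 * (1 + |x| ^ (1 + η))) * s ^ (1 + η)) := by
            refine mul_le_mul_of_nonneg_left ?_ hK'.le
            refine mul_le_mul (mul_le_mul_of_nonneg_left hlin hC₂.le) hs2
              (by positivity) (by positivity)
        _ = 2 * K' * C₂ * (1 + |x| ^ (1 + η)) * s ^ (1 + η) := by ring
    calc |a (f s) - a x - s * (a x * a' x)|
        ≤ |a (f s) - a x - a' x * (f s - x)| + |a' x * (f s - x - s * a x)| := by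
          rw [split]; exact abs_add_le _ _
      _ = |a (f s) - a x - a' x * (f s - x)| + |a' x| * |f s - x - s * a x| := by
          rw [abs_mul]
      _ ≤ (4 * C₃ * (1 + C₁ ^ 2) + 2 * K' * C₂) * (1 + |x| ^ (1 + η)) * s ^ (1 + η) := by
          have := add_le_add t1 t2
          linarith
  -- representation of the error as an integral
  have hmul_c : Continuous (fun s : ℝ => s * (a x * a' x)) := continuous_id.mul continuous_const
  have hconst_int : IntervalIntegrable (fun s : ℝ => a x + s * (a x * a' x)) volume 0 t :=
    (continuous_const.add hmul_c).intervalIntegrable _ _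
  have heq3 : f t - x - t * a x - t ^ 2 / 2 * a x * a' x
      = ∫ s in (0 : ℝ)..t, (a (f s) - a x - s * (a x * a' x)) := by
    have h1 : (fun s => a (f s) - a x - s * (a x * a' x))
        = fun s => a (f s) - (a x + s * (a x * a' x)) := funext fun s => by ring
    rw [h1, intervalIntegral.integral_sub (hint t ht) hconst_int,
      intervalIntegral.integral_add intervalIntegrable_const
        (hmul_c.intervalIntegrable _ _),
      intervalIntegral.integral_const, intervalIntegral.integral_mul_const, integral_id,
      hfeq t ht]
    simp; ring
  set Cc := 4 * C₃ * (1 + C₁ ^ 2) + 2 * K' * C₂ with hCcdef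
  have hCc : 0 < Cc := by positivity
  have hae : ∀ᵐ s ∂(volume.restrict (Set.uIoc (0 : ℝ) t)),
      ‖a (f s) - a x - s * (a x * a' x)‖ ≤ Cc * (1 + |x| ^ (1 + η)) * s ^ (1 + η) := by
    rw [Set.uIoc_of_le ht.1]
    refine ae_restrict_of_forall_mem measurableSet_Ioc fun s hs => ?_
    rw [Real.norm_eq_abs]
    exact key s hs
  have hgint : IntervalIntegrable (fun s => Cc * (1 + |x| ^ (1 + η)) * s ^ (1 + η))
      volume 0 t :=
    (intervalIntegral.intervalIntegrable_rpow (Or.inl (by linarith))).const_mul _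
  have hnorm := intervalIntegral.norm_integral_le_abs_of_norm_le hae hgint
  rw [Real.norm_eq_abs] at hnorm
  have hval : ∫ s in (0 : ℝ)..t, Cc * (1 + |x| ^ (1 + η)) * s ^ (1 + η)
      = Cc * (1 + |x| ^ (1 + η)) * (t ^ (2 + η) / (2 + η)) := by
    rw [intervalIntegral.integral_const_mul, integral_rpow (Or.inl (by linarith))]
    rw [Real.zero_rpow (by linarith : (1 : ℝ) + η + 1 ≠ 0)]
    rw [show (1 : ℝ) + η + 1 = 2 + η by ring]
    ring
  rw [heq3]
  refine hnorm.trans ?_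
  have htp : (0 : ℝ) ≤ t ^ (2 + η) := Real.rpow_nonneg ht.1 _
  rw [hval, abs_of_nonneg (mul_nonneg (mul_nonneg hCc.le hB0)
    (div_nonneg htp (by linarith)))]
  have hdiv : t ^ (2 + η) / (2 + η) ≤ t ^ (2 + η) := by
    rw [div_le_iff₀ (by linarith)]
    nlinarith
  calc Cc * (1 + |x| ^ (1 + η)) * (t ^ (2 + η) / (2 + η))
      ≤ Cc * (1 + |x| ^ (1 + η)) * t ^ (2 + η) :=
        mul_le_mul_of_nonneg_left hdiv (by positivity)
    _ = Cc * (1 + |x| ^ (1 + η)) * t ^ (2 + η) := rfl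
end

section
/- Let δ > 0 and C > 0, and let A : (0, 1] × ℝ → ℝ satisfy |A(t, x) − A(t, y)| ≤ C t^{δ−1} |x − y| for all t ∈ (0, 1] and x, y ∈ ℝ. Let x ∈ ℝ and let g¹, g² : [0, 1] → ℝ be continuous functions such that, for i = 1, 2 and all t ∈ [0, 1], s ↦ A(s, gⁱ(s)) is integrable on (0, t] and gⁱ(t) = x + ∫₀ᵗ A(s, gⁱ(s)) ds. Then g¹(t) = g²(t) for all t ∈ [0, 1]. -/
open MeasureTheory

-- integral of s^(p-1) over Ioc 0 t equals t^p / p, for p > 0, 0 ≤ t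
lemma rpow_setIntegral (p t : ℝ) (hp : 0 < p) (ht : 0 ≤ t) :
    ∫ s in Set.Ioc (0 : ℝ) t, s ^ (p - 1) = t ^ p / p := by
  rw [← intervalIntegral.integral_of_le ht,
    integral_rpow (Or.inl (by linarith))]
  rw [sub_add_cancel, Real.zero_rpow hp.ne', sub_zero]

lemma rpow_integrableOn (p t : ℝ) (hp : 0 < p) :
    IntegrableOn (fun s : ℝ => s ^ (p - 1)) (Set.Ioc 0 t) := by
  rcases le_or_gt 0 t with ht | ht
  · rw [← intervalIntegrable_iff_integrableOn_Ioc_of_le ht]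
    exact intervalIntegral.intervalIntegrable_rpow' (by linarith)
  · simp [Set.Ioc_eq_empty (by linarith : ¬ (0:ℝ) < t)]


/-- Uniqueness for the mollified Cauchy problem: if `A(t,·)` is Lipschitz with constant
`C t^{δ-1}` (integrable singularity at `t = 0`), then two continuous solutions of
`g(t) = x + ∫₀ᵗ A(s, g(s)) ds` on `[0,1]` coincide. -/
theorem singular_lipschitz_ode_unique (δ C : ℝ) (hδ : 0 < δ) (hC : 0 < C)
    (A : ℝ → ℝ → ℝ)
    (hLip : ∀ t ∈ Set.Ioc (0 : ℝ) 1, ∀ x y : ℝ, |A t x - A t y| ≤ C * t ^ (δ - 1) * |x - y|)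
    (x : ℝ) (g₁ g₂ : ℝ → ℝ)
    (hc₁ : ContinuousOn g₁ (Set.Icc 0 1)) (hc₂ : ContinuousOn g₂ (Set.Icc 0 1))
    (hi₁ : ∀ t ∈ Set.Icc (0 : ℝ) 1, IntegrableOn (fun s => A s (g₁ s)) (Set.Ioc 0 t))
    (hi₂ : ∀ t ∈ Set.Icc (0 : ℝ) 1, IntegrableOn (fun s => A s (g₂ s)) (Set.Ioc 0 t))
    (he₁ : ∀ t ∈ Set.Icc (0 : ℝ) 1, g₁ t = x + ∫ s in Set.Ioc (0 : ℝ) t, A s (g₁ s))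
    (he₂ : ∀ t ∈ Set.Icc (0 : ℝ) 1, g₂ t = x + ∫ s in Set.Ioc (0 : ℝ) t, A s (g₂ s)) :
    ∀ t ∈ Set.Icc (0 : ℝ) 1, g₁ t = g₂ t := by

  set φ : ℝ → ℝ := fun s => |g₁ s - g₂ s| with hφ
  have hφc : ContinuousOn φ (Set.Icc 0 1) := ((hc₁.sub hc₂).abs)
  -- bound M
  obtain ⟨u, hu, hM⟩ := isCompact_Icc.exists_isMaxOn (Set.nonempty_Icc.2 zero_le_one) hφc
  set M := φ u with hMdef
  have hM0 : 0 ≤ M := abs_nonneg _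
  -- measurability of φ on restricted measures
  have hφm : ∀ t ∈ Set.Icc (0:ℝ) 1,
      AEStronglyMeasurable φ (volume.restrict (Set.Ioc 0 t)) := by
    intro t ht
    have h1 : AEStronglyMeasurable φ (volume.restrict (Set.Icc 0 1)) :=
      hφc.aestronglyMeasurable measurableSet_Icc
    exact h1.mono_measure (Measure.restrict_mono
      (Set.Ioc_subset_Icc_self.trans (Set.Icc_subset_Icc le_rfl ht.2)) le_rfl)
  have hφle : ∀ s ∈ Set.Icc (0:ℝ) 1, φ s ≤ M := fun s hs => hM hs
  -- integrability of s ↦ C * s^(δ-1) * φ s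
  have hint : ∀ t ∈ Set.Icc (0:ℝ) 1,
      IntegrableOn (fun s => C * s ^ (δ - 1) * φ s) (Set.Ioc 0 t) := by
    intro t ht
    have hbase : IntegrableOn (fun s : ℝ => C * s ^ (δ - 1)) (Set.Ioc 0 t) :=
      (rpow_integrableOn δ t hδ).const_mul C
    have hb : ∀ᵐ s ∂(volume.restrict (Set.Ioc (0:ℝ) t)), ‖φ s‖ ≤ M := by
      filter_upwards [ae_restrict_mem measurableSet_Ioc] with s hs
      have : s ∈ Set.Icc (0:ℝ) 1 := ⟨hs.1.le, hs.2.trans ht.2⟩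
      simpa [Real.norm_eq_abs, hφ, abs_abs] using hφle s this
    have h2 : IntegrableOn (fun s => φ s * (C * s ^ (δ - 1))) (Set.Ioc 0 t) :=
      hbase.bdd_mul (c := M) (hφm t ht) hb
    exact h2.congr_fun (fun s _ => by ring) measurableSet_Ioc
  -- key integral inequality
  have key : ∀ t ∈ Set.Icc (0:ℝ) 1,
      φ t ≤ ∫ s in Set.Ioc (0:ℝ) t, C * s ^ (δ - 1) * φ s := by
    intro t ht
    have hdiff : IntegrableOn (fun s => A s (g₁ s) - A s (g₂ s)) (Set.Ioc 0 t) :=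
      (hi₁ t ht).sub (hi₂ t ht)
    have h1 : φ t = |∫ s in Set.Ioc (0:ℝ) t, (A s (g₁ s) - A s (g₂ s))| := by
      rw [hφ]
      simp only
      rw [he₁ t ht, he₂ t ht, integral_sub (hi₁ t ht) (hi₂ t ht)]
      ring_nf
    rw [h1]
    calc |∫ s in Set.Ioc (0:ℝ) t, (A s (g₁ s) - A s (g₂ s))|
        ≤ ∫ s in Set.Ioc (0:ℝ) t, |A s (g₁ s) - A s (g₂ s)| := by
          simpa [Real.norm_eq_abs] using
            norm_integral_le_integral_norm (μ := volume.restrict (Set.Ioc 0 t))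
              (fun s => A s (g₁ s) - A s (g₂ s))
      _ ≤ ∫ s in Set.Ioc (0:ℝ) t, C * s ^ (δ - 1) * φ s := by
          refine setIntegral_mono_on hdiff.abs (hint t ht) measurableSet_Ioc ?_
          intro s hs
          exact hLip s ⟨hs.1, hs.2.trans ht.2⟩ (g₁ s) (g₂ s)
  -- induction
  have ind : ∀ n : ℕ, ∀ t ∈ Set.Icc (0:ℝ) 1,
      φ t ≤ M * (C * t ^ δ / δ) ^ n / n.factorial := by
    intro n
    induction n with
    | zero => intro t ht; simpa using hφle t ht
    | succ n ih =>
      intro t ht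
      have hK : IntegrableOn
          (fun s : ℝ => M * C ^ (n+1) / (δ ^ n * n.factorial) * s ^ (δ * (n+1) - 1))
          (Set.Ioc 0 t) :=
        (rpow_integrableOn (δ * (n+1)) t (by positivity)).const_mul _
      have hcongr : ∀ s ∈ Set.Ioc (0:ℝ) t,
          C * s ^ (δ - 1) * (M * (C * s ^ δ / δ) ^ n / n.factorial)
            = M * C ^ (n+1) / (δ ^ n * n.factorial) * s ^ (δ * (n+1) - 1) := by
        intro s hs
        have hs0 : (0:ℝ) < s := hs.1
        have h1 : (s ^ δ) ^ n = s ^ (δ * n) := by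
          rw [← Real.rpow_natCast (s ^ δ) n, ← Real.rpow_mul hs0.le]
        have h2 : s ^ (δ - 1) * s ^ (δ * n) = s ^ (δ * (n+1) - 1) := by
          rw [← Real.rpow_add hs0]; ring_nf
        rw [div_pow, mul_pow, h1]
        field_simp
        rw [← h2]
        ring
      calc φ t ≤ ∫ s in Set.Ioc (0:ℝ) t, C * s ^ (δ - 1) * φ s := key t ht
        _ ≤ ∫ s in Set.Ioc (0:ℝ) t,
              C * s ^ (δ - 1) * (M * (C * s ^ δ / δ) ^ n / n.factorial) := by
            refine setIntegral_mono_on (hint t ht) ?_ measurableSet_Ioc ?_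
            · exact hK.congr_fun (fun s hs => (hcongr s hs).symm) measurableSet_Ioc
            · intro s hs
              have hsI : s ∈ Set.Icc (0:ℝ) 1 := ⟨hs.1.le, hs.2.trans ht.2⟩
              have := ih s hsI
              have hs0 : (0:ℝ) ≤ s := hs.1.le
              have hpos : 0 ≤ C * s ^ (δ - 1) := by positivity
              exact mul_le_mul_of_nonneg_left this hpos
        _ = M * C ^ (n+1) / (δ ^ n * n.factorial) *
              ∫ s in Set.Ioc (0:ℝ) t, s ^ (δ * (n+1) - 1) := by
            rw [← integral_const_mul]
            exact setIntegral_congr_fun measurableSet_Ioc hcongr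
        _ = M * (C * t ^ δ / δ) ^ (n+1) / (n+1).factorial := by
            rw [rpow_setIntegral (δ * (n+1)) t (by positivity) ht.1]
            have h3 : t ^ (δ * (n+1)) = (t ^ δ) ^ (n+1) := by
              rw [← Real.rpow_natCast (t ^ δ) (n+1), ← Real.rpow_mul ht.1]
              push_cast; ring_nf
            rw [h3, Nat.factorial_succ, div_pow, mul_pow]
            have : (n.factorial : ℝ) ≠ 0 := Nat.cast_ne_zero.2 n.factorial_ne_zero
            field_simp
            push_cast
            ring
  -- conclude
  intro t ht
  have hlim : Filter.Tendsto (fun n : ℕ => M * (C * t ^ δ / δ) ^ n / n.factorial)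
      Filter.atTop (nhds 0) := by
    have := (FloorSemiring.tendsto_pow_div_factorial_atTop (C * t ^ δ / δ)).const_mul M
    simpa [mul_div_assoc] using this
  have hle : φ t ≤ 0 := ge_of_tendsto hlim (Filter.Eventually.of_forall fun n => ind n t ht)
  have : φ t = 0 := le_antisymm hle (abs_nonneg _)
  exact sub_eq_zero.1 (abs_eq_zero.1 this)
end

section
/- Let ν be a (nonnegative) Borel measure on ℝ, and let κ ≥ 0, β′ > 0, C > 0 be constants such that ν({y : |y − z| ≤ r}) ≤ C r^κ |z|^{−β′−κ} for every z ≠ 0 and every r with 0 < r ≤ |z|/2. Then there exists a constant C′ > 0 such that ν({u : |u| ≥ ε}) ≤ C′ ε^{−β′} for every ε > 0. -/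
/-!
Cover `{|u| ≥ ε}` by the dyadic shells `{ε 2^k ≤ |u| ≤ ε 2^(k+1)}`. Each shell is the union of the
two balls of radius `ε 2^k / 2` centred at `±3 ε 2^k / 2`, whose radius is a third of the distance
of the centre to the origin, so the κ-measure condition bounds its mass by a multiple of
`(ε 2^k)^(-β')`. Summing the geometric series with ratio `2^(-β')` gives the tail bound.
-/

open MeasureTheory

lemma exists_nat_mul_two_pow_le_le {ε t : ℝ} (hε : 0 < ε) (ht : ε ≤ t) :
    ∃ k : ℕ, ε * 2 ^ k ≤ t ∧ t ≤ 2 * (ε * 2 ^ k) := by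
  obtain ⟨k, hk, hk'⟩ := exists_nat_pow_near ((one_le_div hε).mpr ht) one_lt_two
  refine ⟨k, ?_, ?_⟩
  · rwa [le_div_iff₀ hε, mul_comm] at hk
  · rw [div_lt_iff₀ hε, pow_succ] at hk'
    linarith

lemma measure_iUnion_le_ofReal_geometric {α : Type*} [MeasurableSpace α] (μ : Measure α)
    {s : ℕ → Set α} {D q : ℝ} (hD : 0 ≤ D) (hq₀ : 0 ≤ q) (hq₁ : q < 1)
    (hs : ∀ k, μ (s k) ≤ ENNReal.ofReal (D * q ^ k)) :
    μ (⋃ k, s k) ≤ ENNReal.ofReal (D * (1 - q)⁻¹) :=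
  calc μ (⋃ k, s k) ≤ ∑' k, μ (s k) := measure_iUnion_le s
    _ ≤ ∑' k, ENNReal.ofReal (D * q ^ k) := ENNReal.tsum_le_tsum hs
    _ = ENNReal.ofReal (∑' k, D * q ^ k) :=
      (ENNReal.ofReal_tsum_of_nonneg (fun k => by positivity)
        ((summable_geometric_of_lt_one hq₀ hq₁).mul_left D)).symm
    _ = ENNReal.ofReal (D * (1 - q)⁻¹) := by
      rw [tsum_mul_left, tsum_geometric_of_lt_one hq₀ hq₁]

theorem measure_tail_le_of_dyadic_shells {α : Type*} [MeasurableSpace α] (μ : Measure α)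
    (f : α → ℝ) {K β : ℝ} (hK : 0 ≤ K) (hβ : 0 < β)
    (hshell : ∀ t > 0, μ {x | t ≤ f x ∧ f x ≤ 2 * t} ≤ ENNReal.ofReal (K * t ^ (-β)))
    {ε : ℝ} (hε : 0 < ε) :
    μ {x | ε ≤ f x} ≤ ENNReal.ofReal (K * (1 - 2 ^ (-β))⁻¹ * ε ^ (-β)) := by
  set q : ℝ := 2 ^ (-β)
  have hq₁ : q < 1 := Real.rpow_lt_one_of_one_lt_of_neg one_lt_two (neg_neg_iff_pos.mpr hβ)
  have hcover : {x | ε ≤ f x} ⊆ ⋃ k : ℕ, {x | ε * 2 ^ k ≤ f x ∧ f x ≤ 2 * (ε * 2 ^ k)} :=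
    fun x hx => Set.mem_iUnion.mpr (exists_nat_mul_two_pow_le_le hε hx)
  have hpow (k : ℕ) : (ε * 2 ^ k) ^ (-β) = ε ^ (-β) * q ^ k := by
    rw [Real.mul_rpow hε.le (by positivity), ← Real.rpow_natCast_mul zero_le_two, mul_comm (k : ℝ),
      Real.rpow_mul_natCast zero_le_two]
  calc μ {x | ε ≤ f x}
      ≤ μ (⋃ k : ℕ, {x | ε * 2 ^ k ≤ f x ∧ f x ≤ 2 * (ε * 2 ^ k)}) := measure_mono hcover
    _ ≤ ENNReal.ofReal (K * ε ^ (-β) * (1 - q)⁻¹) :=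
      measure_iUnion_le_ofReal_geometric μ (by positivity) (by positivity) hq₁ fun k =>
        (hshell _ (by positivity)).trans_eq (by rw [hpow, mul_assoc])
    _ = ENNReal.ofReal (K * (1 - q)⁻¹ * ε ^ (-β)) := by ring_nf

lemma setOf_abs_shell_subset_union (t : ℝ) :
    {u : ℝ | t ≤ |u| ∧ |u| ≤ 2 * t} ⊆
      {y | |y - 3 * t / 2| ≤ t / 2} ∪ {y | |y - -(3 * t / 2)| ≤ t / 2} := by
  rintro u ⟨hlow, hhigh⟩
  rcases abs_cases u with ⟨hu, -⟩ | ⟨hu, -⟩ <;> rw [hu] at hlow hhigh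
  · exact .inl (show |u - 3 * t / 2| ≤ t / 2 from abs_le.mpr ⟨by linarith, by linarith⟩)
  · exact .inr (show |u - -(3 * t / 2)| ≤ t / 2 from abs_le.mpr ⟨by linarith, by linarith⟩)

lemma rpow_mul_rpow_neg_sub {r z : ℝ} (hr : 0 ≤ r) (hz : 0 < z) (κ β : ℝ) :
    r ^ κ * z ^ (-β - κ) = (r / z) ^ κ * z ^ (-β) := by
  rw [Real.div_rpow hr hz.le, sub_eq_add_neg, Real.rpow_add hz, Real.rpow_neg hz.le κ]
  ring

theorem measure_abs_shell_le_of_ball_bound (ν : Measure ℝ) {κ β' C : ℝ}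
    (hball : ∀ z : ℝ, z ≠ 0 → ∀ r : ℝ, 0 < r → r ≤ |z| / 2 →
      ν {y | |y - z| ≤ r} ≤ ENNReal.ofReal (C * r ^ κ * |z| ^ (-β' - κ)))
    {t : ℝ} (ht : 0 < t) :
    ν {u | t ≤ |u| ∧ |u| ≤ 2 * t} ≤
      ENNReal.ofReal (2 * C * 3⁻¹ ^ κ * (3 / 2) ^ (-β') * t ^ (-β')) := by
  have hcentre : |3 * t / 2| = 3 * t / 2 := abs_of_pos (by positivity)
  have hmass : C * (t / 2) ^ κ * (3 * t / 2) ^ (-β' - κ) =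
      C * 3⁻¹ ^ κ * (3 / 2) ^ (-β') * t ^ (-β') := by
    rw [mul_assoc C, rpow_mul_rpow_neg_sub (by positivity) (by positivity),
      mul_div_assoc 3 t 2, mul_comm 3 (t / 2), div_mul_cancel_left₀ (by positivity),
      show t / 2 * 3 = 3 / 2 * t by ring, Real.mul_rpow (by positivity) ht.le]
    ring
  have hright := hball (3 * t / 2) (by positivity) (t / 2) (by positivity) (by rw [hcentre]; linarith)
  have hleft := hball (-(3 * t / 2)) (by simp [ht.ne']) (t / 2) (by positivity)
    (by rw [abs_neg, hcentre]; linarith)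
  rw [abs_neg] at hleft
  rw [hcentre, hmass] at hleft hright
  calc ν {u | t ≤ |u| ∧ |u| ≤ 2 * t}
      ≤ ν {y | |y - 3 * t / 2| ≤ t / 2} + ν {y | |y - -(3 * t / 2)| ≤ t / 2} :=
        (measure_mono (setOf_abs_shell_subset_union t)).trans (measure_union_le _ _)
    _ ≤ ENNReal.ofReal (C * 3⁻¹ ^ κ * (3 / 2) ^ (-β') * t ^ (-β'))
        + ENNReal.ofReal (C * 3⁻¹ ^ κ * (3 / 2) ^ (-β') * t ^ (-β')) := add_le_add hright hleft
    _ = ENNReal.ofReal (2 * C * 3⁻¹ ^ κ * (3 / 2) ^ (-β') * t ^ (-β')) := by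
      rw [← two_mul, ← ENNReal.ofReal_ofNat 2, ← ENNReal.ofReal_mul zero_le_two]
      ring_nf

theorem kappa_measure_tail_bound_general (ν : Measure ℝ) (κ β' C : ℝ)
    (hβ : 0 < β') (hC : 0 < C)
    (hball : ∀ z : ℝ, z ≠ 0 → ∀ r : ℝ, 0 < r → r ≤ |z| / 2 →
      ν {y | |y - z| ≤ r} ≤ ENNReal.ofReal (C * r ^ κ * |z| ^ (-β' - κ))) :
    ∃ C' > 0, ∀ ε : ℝ, 0 < ε →
      ν {u | ε ≤ |u|} ≤ ENNReal.ofReal (C' * ε ^ (-β')) := by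
  set K : ℝ := 2 * C * 3⁻¹ ^ κ * (3 / 2) ^ (-β')
  have hK : 0 < K := by positivity
  have hq : (0 : ℝ) < 1 - 2 ^ (-β') :=
    sub_pos.mpr (Real.rpow_lt_one_of_one_lt_of_neg one_lt_two (neg_neg_iff_pos.mpr hβ))
  exact ⟨K * (1 - 2 ^ (-β'))⁻¹, by positivity, fun ε hε =>
    measure_tail_le_of_dyadic_shells ν (fun u => |u|) hK.le hβ
      (fun t ht => measure_abs_shell_le_of_ball_bound ν hball ht) hε⟩

/-- A measure satisfying the `κ`-measure condition `ν(B_r(z)) ≤ C r^κ |z|^{-β'-κ}` for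
`0 < r ≤ |z|/2` has Blumenthal–Getoor-type tails: `ν({|u| ≥ ε}) ≤ C' ε^{-β'}` for all `ε > 0`. -/
theorem kappa_measure_tail_bound (ν : Measure ℝ) (κ β' C : ℝ)
    (hκ : 0 ≤ κ) (hβ : 0 < β') (hC : 0 < C)
    (hball : ∀ z : ℝ, z ≠ 0 → ∀ r : ℝ, 0 < r → r ≤ |z| / 2 →
      ν {y | |y - z| ≤ r} ≤ ENNReal.ofReal (C * r ^ κ * |z| ^ (-β' - κ))) :
    ∃ C' > 0, ∀ ε : ℝ, 0 < ε →
      ν {u | ε ≤ |u|} ≤ ENNReal.ofReal (C' * ε ^ (-β')) :=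
  kappa_measure_tail_bound_general ν κ β' C hβ hC hball
end

section
/- Let ν be a (nonnegative) Borel measure on ℝ, and let κ ≥ 0, β′ > 0, C₀ > 0 be constants with κ + β′ > 1 such that ν({y : |y − z| ≤ r}) ≤ C₀ r^κ |z|^{−β′−κ} for every z ≠ 0 and every r with 0 < r ≤ |z|/2. Let α ∈ (β′, 2), let 0 < m ≤ M be constants, let σ : ℝ → ℝ be a measurable function with m ≤ 1/σ(x) ≤ M for all x, and set ε = m/(3M). Then there exists a constant C > 0 such that for all t ∈ (0, 1] and all w ∈ ℝ, t^{−1/α} ∫_ℝ ν({u : |u| > m t^{1/α} and |u − (w − x)/σ(x)| < ε M t^{1/α}}) dx ≤ C t^{−β′/α} = C t^{−1+δ′}, where δ′ = 1 − β′/α > 0. -/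
open MeasureTheory

private lemma tail_lintegral_abs {p a : ℝ} (hp : 1 < p) (ha : 0 < a) :
    ∫⁻ y in {y : ℝ | a < |y|}, ENNReal.ofReal (|y| ^ (-p)) ≤
      ENNReal.ofReal (2 * (a ^ (1 - p) / (p - 1))) := by
  have hmeas : Measurable fun y : ℝ => ENNReal.ofReal (|y| ^ (-p)) := by fun_prop
  have hIoi : ∫⁻ y in Set.Ioi a, ENNReal.ofReal (|y| ^ (-p))
      = ENNReal.ofReal (a ^ (1 - p) / (p - 1)) := by
    have h1 : ∫⁻ y in Set.Ioi a, ENNReal.ofReal (|y| ^ (-p))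
        = ∫⁻ y in Set.Ioi a, ENNReal.ofReal (y ^ (-p)) := by
      refine setLIntegral_congr_fun measurableSet_Ioi (fun y hy => ?_)
      rw [abs_of_pos (ha.trans hy)]
    rw [h1, ← ofReal_integral_eq_lintegral_ofReal
        (integrableOn_Ioi_rpow_of_lt (by linarith) ha) ?_]
    · rw [integral_Ioi_rpow_of_lt (by linarith) ha]
      congr 1
      have h2 : -p + 1 = -(p - 1) := by ring
      rw [h2, neg_div_neg_eq]
      congr 1
      ring
    · filter_upwards [self_mem_ae_restrict measurableSet_Ioi] with y hy
      exact Real.rpow_nonneg (le_of_lt (ha.trans hy)) _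
  have hIio : ∫⁻ y in Set.Iio (-a), ENNReal.ofReal (|y| ^ (-p))
      = ∫⁻ y in Set.Ioi a, ENNReal.ofReal (|y| ^ (-p)) := by
    have hpre : (Neg.neg ⁻¹' (Set.Ioi a) : Set ℝ) = Set.Iio (-a) := by
      ext x; simp [lt_neg]
    have := (Measure.measurePreserving_neg (volume : Measure ℝ)).setLIntegral_comp_preimage
      (measurableSet_Ioi : MeasurableSet (Set.Ioi a)) hmeas
    rw [hpre] at this
    rw [← this]
    refine setLIntegral_congr_fun measurableSet_Iio (fun y _ => ?_)
    rw [abs_neg]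
  have hset : {y : ℝ | a < |y|} = Set.Iio (-a) ∪ Set.Ioi a := by
    ext y
    simp only [Set.mem_setOf_eq, Set.mem_union, Set.mem_Iio, Set.mem_Ioi, lt_abs, lt_neg]
    tauto
  rw [hset, lintegral_union measurableSet_Ioi ((Set.Iic_disjoint_Ioi (by linarith : -a ≤ a)).mono Set.Iio_subset_Iic_self le_rfl),
    hIio, hIoi, ← ENNReal.ofReal_add (div_nonneg (Real.rpow_nonneg ha.le _) (by linarith)) (div_nonneg (Real.rpow_nonneg ha.le _) (by linarith))]
  exact ENNReal.ofReal_le_ofReal (by ring_nf; exact le_refl _)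

/-- Core estimate in the proof of Theorem A.2: under the `κ`-measure condition on the
nuisance Lévy measure `ν` (with `κ + β' > 1`, `β' < α < 2`) and with `m ≤ 1/σ ≤ M`,
setting `ε = m/(3M)`, one has `δ' = 1 - β'/α > 0` and
`t^{-1/α} ∫_ℝ ν({|u| > m t^{1/α}, |u - (w-x)/σ(x)| < ε M t^{1/α}}) dx ≤ C t^{-β'/α} = C t^{-1+δ'}`
uniformly in `w` and `t ∈ (0,1]`. -/
theorem integrated_small_ball_estimate (ν : Measure ℝ) (κ β' C₀ : ℝ)
    (hκ : 0 ≤ κ) (hβ : 0 < β') (hC₀ : 0 < C₀) (hκβ : 1 < κ + β')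
    (hball : ∀ z : ℝ, z ≠ 0 → ∀ r : ℝ, 0 < r → r ≤ |z| / 2 →
      ν {y | |y - z| ≤ r} ≤ ENNReal.ofReal (C₀ * r ^ κ * |z| ^ (-β' - κ)))
    (α : ℝ) (hα : α ∈ Set.Ioo β' 2)
    (m M : ℝ) (hm : 0 < m) (hmM : m ≤ M)
    (σ : ℝ → ℝ) (hσ : Measurable σ)
    (hσb : ∀ x : ℝ, m ≤ 1 / σ x ∧ 1 / σ x ≤ M) :
    0 < 1 - β' / α ∧
    ∃ C > 0, ∀ t ∈ Set.Ioc (0 : ℝ) 1, ∀ w : ℝ,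
      ENNReal.ofReal (t ^ (-(1 / α))) *
        (∫⁻ x : ℝ, ν {u | m * t ^ (1 / α) < |u| ∧
          |u - (w - x) / σ x| < m / (3 * M) * M * t ^ (1 / α)})
        ≤ ENNReal.ofReal (C * t ^ (-(β' / α))) := by
  obtain ⟨hβα, hα2⟩ := hα
  have hα0 : 0 < α := hβ.trans hβα
  have hM : 0 < M := hm.trans_le hmM
  set p := β' + κ with hpdef
  have hp1 : 1 < p := by rw [hpdef]; linarith
  have hppe : -β' - κ = -p := by rw [hpdef]; ring
  refine ⟨by rw [sub_pos, div_lt_one hα0]; exact hβα, ?_⟩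
  have hCpos : 0 < 2 * C₀ * (m / 3) ^ κ * m ^ (-p) * (2 * m / (3 * M)) ^ (1 - p) / (p - 1) :=
    div_pos (by positivity) (by linarith)
  refine ⟨_, hCpos, ?_⟩
  rintro t ⟨ht0, ht1⟩ w
  set h := t ^ (1 / α) with hhdef
  have hh0 : 0 < h := Real.rpow_pos_of_pos ht0 _
  set a := 2 * m / (3 * M) * h with hadef
  have ha0 : 0 < a := by positivity
  have hMne : M ≠ 0 := hM.ne'
  have hrad : m / (3 * M) * M * h = m / 3 * h := by field_simp
  have key : ∀ x : ℝ, ν {u | m * h < |u| ∧ |u - (w - x) / σ x| < m / (3 * M) * M * h}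
      ≤ ENNReal.ofReal (C₀ * (m / 3 * h) ^ κ * m ^ (-p)) *
        ENNReal.ofReal (({y : ℝ | a < |w - y|}).indicator (fun y => |w - y| ^ (-p)) x) := by
    intro x
    obtain ⟨hs1, hs2⟩ := hσb x
    have hσ0 : 0 < σ x := by
      by_contra hc
      push_neg at hc
      have h1 : 1 / σ x ≤ 0 := by
        rcases hc.lt_or_eq with hlt | heq
        · exact le_of_lt (div_neg_of_pos_of_neg one_pos hlt)
        · simp [heq]
      linarith
    set z := (w - x) / σ x with hzdef
    have hz1 : m * |w - x| ≤ |z| := by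
      rw [hzdef, abs_div, abs_of_pos hσ0]
      calc m * |w - x| = |w - x| * m := mul_comm _ _
        _ ≤ |w - x| * (1 / σ x) := mul_le_mul_of_nonneg_left hs1 (abs_nonneg _)
        _ = |w - x| / σ x := by ring
    have hz2 : |z| ≤ M * |w - x| := by
      rw [hzdef, abs_div, abs_of_pos hσ0]
      calc |w - x| / σ x = |w - x| * (1 / σ x) := by ring
        _ ≤ |w - x| * M := mul_le_mul_of_nonneg_left hs2 (abs_nonneg _)
        _ = M * |w - x| := mul_comm _ _
    rw [hrad]
    by_cases hcase : |z| ≤ 2 * (m / 3 * h)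
    · have hempty : {u : ℝ | m * h < |u| ∧ |u - z| < m / 3 * h} = ∅ := by
        ext u
        simp only [Set.mem_setOf_eq, Set.mem_empty_iff_false, iff_false, not_and, not_lt]
        intro h1
        have h2 := abs_sub_abs_le_abs_sub u z
        have h3 : m / 3 * h + 2 * (m / 3 * h) = m * h := by ring
        linarith
      rw [hempty, measure_empty]
      exact zero_le
    · push_neg at hcase
      have hzpos : 0 < |z| := lt_trans (by positivity) hcase
      have hzne : z ≠ 0 := abs_pos.mp hzpos
      have hwx : 0 < |w - x| := by nlinarith [abs_nonneg (w - x)]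
      have hmono : ν {u | m * h < |u| ∧ |u - z| < m / 3 * h} ≤ ν {y | |y - z| ≤ m / 3 * h} :=
        measure_mono fun u hu => le_of_lt hu.2
      have hb := hball z hzne (m / 3 * h) (by positivity) (by linarith)
      refine hmono.trans (hb.trans ?_)
      have hind : ({y : ℝ | a < |w - y|}).indicator (fun y => |w - y| ^ (-p)) x
          = |w - x| ^ (-p) := by
        apply Set.indicator_of_mem
        show a < |w - x|
        have e1 : a * M = 2 * (m / 3 * h) := by rw [hadef]; field_simp
        have e2 : a * M < |w - x| * M := by
          rw [e1]; calc 2 * (m / 3 * h) < |z| := hcase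
            _ ≤ M * |w - x| := hz2
            _ = |w - x| * M := mul_comm _ _
        exact lt_of_mul_lt_mul_right e2 hM.le
      rw [hind, ← ENNReal.ofReal_mul (by positivity)]
      apply ENNReal.ofReal_le_ofReal
      rw [hppe]
      have h1 : |z| ^ (-p) ≤ (m * |w - x|) ^ (-p) :=
        Real.rpow_le_rpow_of_nonpos (mul_pos hm hwx) hz1 (by linarith)
      have h2 : (m * |w - x|) ^ (-p) = m ^ (-p) * |w - x| ^ (-p) :=
        Real.mul_rpow hm.le (abs_nonneg _)
      calc C₀ * (m / 3 * h) ^ κ * |z| ^ (-p)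
          ≤ C₀ * (m / 3 * h) ^ κ * (m * |w - x|) ^ (-p) := by
            exact mul_le_mul_of_nonneg_left h1 (by positivity)
        _ = C₀ * (m / 3 * h) ^ κ * m ^ (-p) * |w - x| ^ (-p) := by rw [h2]; ring
  have hsmeas : MeasurableSet {y : ℝ | a < |w - y|} :=
    measurableSet_lt measurable_const ((measurable_const.sub measurable_id).abs)
  have hintegrand : ∫⁻ x : ℝ,
      ENNReal.ofReal (({y : ℝ | a < |w - y|}).indicator (fun y => |w - y| ^ (-p)) x)
      ≤ ENNReal.ofReal (2 * (a ^ (1 - p) / (p - 1))) := by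
    have e1 : ∀ x : ℝ, ENNReal.ofReal
        (({y : ℝ | a < |w - y|}).indicator (fun y => |w - y| ^ (-p)) x)
        = ({y : ℝ | a < |w - y|}).indicator (fun y => ENNReal.ofReal (|w - y| ^ (-p))) x := by
      intro x
      by_cases hx : x ∈ {y : ℝ | a < |w - y|} <;> simp [hx]
    simp_rw [e1]
    rw [lintegral_indicator hsmeas]
    have hmp : MeasurePreserving (fun x : ℝ => w - x) volume volume :=
      Measure.measurePreserving_sub_left volume w
    have hpre : {y : ℝ | a < |w - y|} = (fun x : ℝ => w - x) ⁻¹' {y : ℝ | a < |y|} := rfl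
    have hf : Measurable fun y : ℝ => ENNReal.ofReal (|y| ^ (-p)) := by fun_prop
    have hs' : MeasurableSet {y : ℝ | a < |y|} :=
      measurableSet_lt measurable_const measurable_abs
    have := hmp.setLIntegral_comp_preimage hs' hf
    rw [hpre]
    calc ∫⁻ x in (fun x : ℝ => w - x) ⁻¹' {y : ℝ | a < |y|}, ENNReal.ofReal (|w - x| ^ (-p))
        = ∫⁻ y in {y : ℝ | a < |y|}, ENNReal.ofReal (|y| ^ (-p)) := this
      _ ≤ ENNReal.ofReal (2 * (a ^ (1 - p) / (p - 1))) := tail_lintegral_abs hp1 ha0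
  calc ENNReal.ofReal (t ^ (-(1 / α))) *
      ∫⁻ x : ℝ, ν {u | m * h < |u| ∧ |u - (w - x) / σ x| < m / (3 * M) * M * h}
      ≤ ENNReal.ofReal (t ^ (-(1 / α))) *
        ∫⁻ x : ℝ, ENNReal.ofReal (C₀ * (m / 3 * h) ^ κ * m ^ (-p)) *
          ENNReal.ofReal (({y : ℝ | a < |w - y|}).indicator (fun y => |w - y| ^ (-p)) x) :=
        mul_le_mul_right (lintegral_mono key) _
    _ = ENNReal.ofReal (t ^ (-(1 / α))) *
        (ENNReal.ofReal (C₀ * (m / 3 * h) ^ κ * m ^ (-p)) *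
          ∫⁻ x : ℝ, ENNReal.ofReal
            (({y : ℝ | a < |w - y|}).indicator (fun y => |w - y| ^ (-p)) x)) := by
        rw [lintegral_const_mul' _ _ ENNReal.ofReal_ne_top]
    _ ≤ ENNReal.ofReal (t ^ (-(1 / α))) *
        (ENNReal.ofReal (C₀ * (m / 3 * h) ^ κ * m ^ (-p)) *
          ENNReal.ofReal (2 * (a ^ (1 - p) / (p - 1)))) := by
        gcongr
    _ = ENNReal.ofReal (t ^ (-(1 / α)) *
        (C₀ * (m / 3 * h) ^ κ * m ^ (-p) * (2 * (a ^ (1 - p) / (p - 1))))) := by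
        rw [← ENNReal.ofReal_mul (by positivity), ← ENNReal.ofReal_mul (by positivity)]
    _ ≤ ENNReal.ofReal (2 * C₀ * (m / 3) ^ κ * m ^ (-p) * (2 * m / (3 * M)) ^ (1 - p) / (p - 1)
        * t ^ (-(β' / α))) := by
        apply ENNReal.ofReal_le_ofReal
        apply le_of_eq
        rw [hadef, Real.mul_rpow (by positivity) hh0.le, Real.mul_rpow (by positivity) hh0.le]
        have e : t ^ (-(1 / α)) * (h ^ κ * h ^ (1 - p)) = t ^ (-(β' / α)) := by
          rw [hhdef, ← Real.rpow_mul ht0.le, ← Real.rpow_mul ht0.le,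
            ← Real.rpow_add ht0, ← Real.rpow_add ht0]
          congr 1
          rw [hpdef]
          field_simp
          ring
        have hα0' : α ≠ 0 := ne_of_gt hα0
        linear_combination (2 * C₀ * (m / 3) ^ κ * m ^ (-p) * (2 * m / (3 * M)) ^ (1 - p) / (p - 1)) * e
end
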